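/- arXiv:2510.13295 — 2 statements merged into one kernel-verified Lean document; each statement's English description precedes it below -/
import Mathlib

section
/- The finite part of the divergent harmonic sum H_{1,1,1}: the sequence H_{1,1,1}(n) − (1/6)·(log n)³ − (γ/2)·(log n)² − ((γ² − ζ(2))/2)·log n converges as n → ∞, and its limit equals (γ³ − 3·ζ(2)·γ + 2·ζ(3))/6. -/
/-! Newton's identity expresses `6 H_{1,1,1}(n)` through the power sums
`p_k(n) = Σ_{m ≤ n} m^{-k}` as `p₁³ - 3 p₁ p₂ + 2 p₃`. Writing `p₁(n) = log n + e_n` with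
`e_n → γ`, the sequence in the theorem equals
`(e_n - γ) log² n / 2 + ((e_n - γ)(e_n + γ) + ζ(2) - p₂(n)) log n / 2
  + (e_n³ - 3 p₂ e_n + 2 p₃) / 6`.
Since `e_n - γ` and `ζ(2) - p₂(n)` are both `O(1/n)`, the first two terms tend to `0`, and the
last tends to `(γ³ - 3 ζ(2) γ + 2 ζ(3)) / 6`. -/

/-- The multiple harmonic sum `H_{s_1,…,s_r}(n) = Σ_{n ≥ n_1 > … > n_r > 0}
1/(n_1^{s_1}⋯n_r^{s_r}) ∈ ℚ`, defined by the nested recursion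
`H_{s::t}(n) = Σ_{m=1}^{n} (1/m^s)·H_t(m-1)`. -/
def H : List ℕ → ℕ → ℚ
  | [], _ => 1
  | s :: t, n => ∑ m ∈ Finset.Icc 1 n, (1 / (m : ℚ) ^ s) * H t (m - 1)

/-- The zeta value `ζ(k) = Σ_{n≥1} 1/n^k`. -/
noncomputable def zeta (k : ℕ) : ℝ := ∑' n : ℕ, (1 : ℝ) / ((n : ℝ) + 1) ^ k

open Filter Topology Finset Asymptotics

section PowerSum

variable (K : Type*) [Field K]

def powerSum (k n : ℕ) : K := ∑ m ∈ Icc 1 n, 1 / (m : K) ^ k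

variable {K}

lemma powerSum_succ (k n : ℕ) :
    powerSum K k (n + 1) = powerSum K k n + 1 / ((n : K) + 1) ^ k := by
  rw [powerSum, sum_Icc_succ_top (by omega), Nat.cast_succ, powerSum]

lemma powerSum_eq_sum_range (k n : ℕ) :
    powerSum K k n = ∑ i ∈ range n, 1 / ((i : K) + 1) ^ k := by
  induction n with
  | zero => simp [powerSum]
  | succ n ih => rw [powerSum_succ, ih, sum_range_succ]

lemma powerSum_add_sum_Ioc (k : ℕ) {n N : ℕ} (h : n ≤ N) :
    powerSum K k n + ∑ m ∈ Ioc n N, 1 / (m : K) ^ k = powerSum K k N := by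
  have hIcc (m : ℕ) : Icc 1 m = Ioc 0 m := Icc_add_one_left_eq_Ioc 0 m
  rw [powerSum, powerSum, hIcc, hIcc]
  exact sum_Ioc_consecutive _ n.zero_le h

lemma harmonic_eq_powerSum_one [CharZero K] (n : ℕ) : (harmonic n : K) = powerSum K 1 n := by
  simp [harmonic_eq_sum_Icc, powerSum]

end PowerSum

lemma H_cons_zero (s : ℕ) (t : List ℕ) : H (s :: t) 0 = 0 := by
  simp [H]

section Newton

variable {K : Type*} [Field K] [CharZero K]

lemma H_cons_succ (s : ℕ) (t : List ℕ) (n : ℕ) :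
    (H (s :: t) (n + 1) : K) = H (s :: t) n + 1 / ((n : K) + 1) ^ s * H t n := by
  simp only [H]
  rw [sum_Icc_succ_top (by omega)]
  push_cast
  simp

lemma H_singleton (s n : ℕ) : (H [s] n : K) = powerSum K s n := by
  simp [H, powerSum]

lemma two_mul_H_pair (s n : ℕ) :
    2 * (H [s, s] n : K) = powerSum K s n ^ 2 - powerSum K (2 * s) n := by
  induction n with
  | zero => simp [H_cons_zero, powerSum]
  | succ n ih =>
    rw [H_cons_succ, H_singleton, powerSum_succ, powerSum_succ, pow_mul']
    linear_combination ih

lemma six_mul_H_triple (s n : ℕ) :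
    6 * (H [s, s, s] n : K) =
      powerSum K s n ^ 3 - 3 * powerSum K s n * powerSum K (2 * s) n
        + 2 * powerSum K (3 * s) n := by
  induction n with
  | zero => simp [H_cons_zero, powerSum]
  | succ n ih =>
    rw [H_cons_succ, powerSum_succ, powerSum_succ, powerSum_succ, pow_mul', pow_mul']
    linear_combination ih + 3 / ((n : K) + 1) ^ s * two_mul_H_pair (K := K) s n

end Newton

lemma monotone_powerSum {K : Type*} [Field K] [LinearOrder K] [IsStrictOrderedRing K] (k : ℕ) :
    Monotone (powerSum K k) :=
  monotone_nat_of_le_succ fun n => by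
    rw [powerSum_succ]
    exact le_add_of_nonneg_right (by positivity)

lemma tendsto_powerSum_zeta {k : ℕ} (hk : 2 ≤ k) :
    Tendsto (powerSum ℝ k) atTop (𝓝 (zeta k)) := by
  have hs : Summable fun n : ℕ => 1 / ((n : ℝ) + 1) ^ k := by
    exact_mod_cast (summable_nat_add_iff 1).mpr (Real.summable_one_div_nat_pow.mpr hk)
  rw [show powerSum ℝ k = _ from funext (powerSum_eq_sum_range k)]
  exact hs.hasSum.tendsto_sum_nat

lemma zeta_two_sub_powerSum_le {n : ℕ} (hn : n ≠ 0) :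
    zeta 2 - powerSum ℝ 2 n ≤ (n : ℝ)⁻¹ := by
  rw [sub_le_iff_le_add']
  refine le_of_tendsto (tendsto_powerSum_zeta le_rfl) ((eventually_ge_atTop n).mono fun N hN => ?_)
  rw [← powerSum_add_sum_Ioc (K := ℝ) 2 hN]
  simp only [one_div, add_le_add_iff_left]
  exact (sum_Ioc_inv_sq_le_sub hn hN).trans (sub_le_self _ (by positivity))

lemma isBigO_zeta_two_sub_powerSum :
    (fun n => zeta 2 - powerSum ℝ 2 n) =O[atTop] fun n => (n : ℝ)⁻¹ := by
  refine IsBigO.of_bound 1 ((eventually_ne_atTop 0).mono fun n hn => ?_)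
  have hnonneg := (monotone_powerSum (K := ℝ) 2).ge_of_tendsto (tendsto_powerSum_zeta le_rfl) n
  rw [Real.norm_of_nonneg (sub_nonneg.mpr hnonneg), norm_inv, Real.norm_natCast, one_mul]
  exact zeta_two_sub_powerSum_le hn

lemma log_add_one_sub_log_le_inv {x : ℝ} (hx : 0 < x) :
    Real.log (x + 1) - Real.log x ≤ x⁻¹ := by
  rw [← Real.log_div (by positivity) hx.ne']
  calc Real.log ((x + 1) / x) ≤ (x + 1) / x - 1 := Real.log_le_sub_one_of_pos (by positivity)
    _ = x⁻¹ := by field_simp; ring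

lemma isBigO_harmonic_sub_log_sub_eulerMascheroniConstant :
    (fun n : ℕ => (harmonic n : ℝ) - Real.log n - Real.eulerMascheroniConstant) =O[atTop]
      fun n => (n : ℝ)⁻¹ := by
  refine IsBigO.of_bound 1 ((eventually_ne_atTop 0).mono fun n hn => ?_)
  have hlow := Real.eulerMascheroniConstant_lt_eulerMascheroniSeq' n
  have hup := Real.eulerMascheroniSeq_lt_eulerMascheroniConstant n
  have hlog := log_add_one_sub_log_le_inv (x := n) (by positivity)
  rw [Real.eulerMascheroniSeq', if_neg hn] at hlow
  rw [Real.eulerMascheroniSeq] at hup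
  rw [Real.norm_of_nonneg (by linarith), norm_inv, Real.norm_natCast, one_mul]
  linarith

lemma tendsto_mul_log_pow_of_isBigO_inv {a : ℕ → ℝ} (ha : a =O[atTop] fun n => (n : ℝ)⁻¹)
    (k : ℕ) : Tendsto (fun n => a n * Real.log n ^ k) atTop (𝓝 0) := by
  refine (ha.mul (isBigO_refl (fun n : ℕ => Real.log n ^ k) atTop)).trans_tendsto ?_
  simpa [Function.comp_def, div_eq_inv_mul] using
    (Real.tendsto_pow_log_div_mul_add_atTop 1 0 k one_ne_zero).comp tendsto_natCast_atTop_atTop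

/-- finite part of the divergent harmonic sum `H_{1,1,1}`: the sequence
`H_{1,1,1}(n) − (1/6)(log n)³ − (γ/2)(log n)² − ((γ² − ζ(2))/2)·log n` converges as
`n → ∞`, with limit `(γ³ − 3·ζ(2)·γ + 2·ζ(3))/6`, where `γ` is the Euler–Mascheroni
constant. -/
theorem finitePart_H_one_one_one :
    Filter.Tendsto
      (fun n : ℕ => (H [1, 1, 1] n : ℝ) - (1 / 6) * Real.log n ^ 3
        - (Real.eulerMascheroniConstant / 2) * Real.log n ^ 2
        - ((Real.eulerMascheroniConstant ^ 2 - zeta 2) / 2) * Real.log n)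
      Filter.atTop
      (nhds ((Real.eulerMascheroniConstant ^ 3
        - 3 * zeta 2 * Real.eulerMascheroniConstant + 2 * zeta 3) / 6)) := by
  set γ := Real.eulerMascheroniConstant
  set e : ℕ → ℝ := fun n => harmonic n - Real.log n
  have he : Tendsto e atTop (𝓝 γ) := Real.tendsto_harmonic_sub_log
  have hζ2 := tendsto_powerSum_zeta (k := 2) le_rfl
  have hζ3 := tendsto_powerSum_zeta (k := 3) (by norm_num)
  have hA : Tendsto (fun n => (e n - γ) * Real.log n ^ 2) atTop (𝓝 0) :=
    tendsto_mul_log_pow_of_isBigO_inv isBigO_harmonic_sub_log_sub_eulerMascheroniConstant 2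
  have hB : Tendsto
      (fun n => ((e n - γ) * (e n + γ) + (zeta 2 - powerSum ℝ 2 n)) * Real.log n ^ 1)
      atTop (𝓝 0) := by
    refine tendsto_mul_log_pow_of_isBigO_inv (IsBigO.add ?_ isBigO_zeta_two_sub_powerSum) 1
    simpa using isBigO_harmonic_sub_log_sub_eulerMascheroniConstant.mul
      ((he.add_const γ).isBigO_one ℝ)
  have hC : Tendsto (fun n => (e n ^ 3 - 3 * powerSum ℝ 2 n * e n + 2 * powerSum ℝ 3 n) / 6)
      atTop (𝓝 ((γ ^ 3 - 3 * zeta 2 * γ + 2 * zeta 3) / 6)) :=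
    (((he.pow 3).sub ((hζ2.const_mul 3).mul he)).add (hζ3.const_mul 2)).div_const 6
  have hsum := ((hA.div_const 2).add (hB.div_const 2)).add hC
  rw [zero_div, zero_add, zero_add] at hsum
  refine hsum.congr fun n => ?_
  have hnewton := six_mul_H_triple (K := ℝ) 1 n
  rw [← harmonic_eq_powerSum_one] at hnewton
  linear_combination (-1 / 6 : ℝ) * hnewton
end

section
/- ζ(4,1) = 2·ζ(5) − ζ(2)·ζ(3), i.e. Σ_{m>n>0} 1/(m⁴·n) = 2·Σ_{n≥1} 1/n⁵ − (Σ_{n≥1} 1/n²)·(Σ_{n≥1} 1/n³). -/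
/-- The double zeta value `ζ(a,b) = Σ_{m>n>0} 1/(m^a·n^b)`. -/
noncomputable def dzeta (a b : ℕ) : ℝ :=
  ∑' p : {p : ℕ × ℕ // p.2 < p.1 ∧ 0 < p.2},
    (1 : ℝ) / ((p.1.1 : ℝ) ^ a * (p.1.2 : ℝ) ^ b)

/-!
With `T(a,b,c) = Σ_{u,v ≥ 1} 1/(u^a v^b (u+v)^c)` (Mordell–Tornheim sums) one has
`T(0,b,a) = ζ(a,b)`. Multiplying the summand by `(u+v)/(u+v)` gives
`T(a+1,b+1,c) = T(a,b+1,c+1) + T(a+1,b,c+1)`, and summing over `u` first (a telescoping sum)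
gives `T(b,1,1) = Σ_v H_v / v^(b+1) = ζ(b+1,1) + ζ(b+2)`. Expanding `T(1,3,1)` twice,
`ζ(4,1) + ζ(5) = ζ(2,3) + ζ(3,2) + T(1,1,3) = ζ(2,3) + ζ(3,2) + 2 ζ(4,1)`,
and the stuffle relation `ζ(2)ζ(3) = ζ(2,3) + ζ(3,2) + ζ(5)` eliminates the depth-two values.
-/

open Filter Finset Topology

lemma summable_one_div_nat_add_one_pow {p : ℕ} (hp : 2 ≤ p) :
    Summable fun n : ℕ ↦ 1 / ((n : ℝ) + 1) ^ p := by
  simpa using (summable_nat_add_iff 1).mpr (Real.summable_one_div_nat_pow.mpr hp)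

lemma hasSum_sub_add_of_antitone {f : ℕ → ℝ} (hf : Antitone f) (h0 : Tendsto f atTop (𝓝 0))
    (k : ℕ) : HasSum (fun n ↦ f n - f (n + k)) (∑ i ∈ range k, f i) := by
  rw [hasSum_iff_tendsto_nat_of_nonneg fun n ↦ sub_nonneg.mpr (hf (Nat.le_add_right n k))]
  have hpartial (N : ℕ) : ∑ n ∈ range N, (f n - f (n + k)) =
      ∑ i ∈ range k, f i - ∑ i ∈ range k, f (N + i) := by
    have h := (sum_range_add f N k).symm.trans (add_comm N k ▸ sum_range_add f k N)
    simp only [sum_sub_distrib, add_comm _ k] at h ⊢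
    linarith
  have htail : Tendsto (fun N ↦ ∑ i ∈ range k, f (N + i)) atTop (𝓝 0) := by
    simpa using tendsto_finsetSum (range k) fun i _ ↦ h0.comp (tendsto_add_atTop_nat i)
  simpa [hpartial] using tendsto_const_nhds.sub htail

lemma hasSum_one_div_mul_add {k : ℕ} (hk : 0 < k) :
    HasSum (fun n : ℕ ↦ 1 / (((n : ℝ) + 1) * ((n : ℝ) + 1 + k)))
      ((∑ i ∈ range k, 1 / ((i : ℝ) + 1)) / k) := by
  have hanti : Antitone fun n : ℕ ↦ 1 / ((n : ℝ) + 1) := fun m n h ↦ by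
    dsimp only
    gcongr
  refine ((hasSum_sub_add_of_antitone hanti tendsto_one_div_add_atTop_nhds_zero_nat k).div_const
    (k : ℝ)).congr_fun fun n ↦ ?_
  have : (k : ℝ) ≠ 0 := by positivity
  push_cast
  field_simp
  ring

lemma range_add_fst_eq_setOf_lt :
    Set.range (fun c : ℕ × ℕ ↦ (c.1 + c.2 + 1, c.2)) = {q | q.2 < q.1} := by
  ext ⟨m, n⟩
  simp only [Set.mem_range, Set.mem_ofPred_eq, Prod.ext_iff, Prod.exists]
  exact ⟨by omega, fun h ↦ ⟨m - n - 1, n, by omega, rfl⟩⟩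

lemma range_add_snd_eq_setOf_lt :
    Set.range (fun c : ℕ × ℕ ↦ (c.2, c.1 + c.2 + 1)) = {q | q.1 < q.2} := by
  ext ⟨m, n⟩
  simp only [Set.mem_range, Set.mem_ofPred_eq, Prod.ext_iff, Prod.exists]
  exact ⟨by omega, fun h ↦ ⟨n - m - 1, m, rfl, by omega⟩⟩

lemma range_diag_eq_setOf_eq : Set.range (fun n : ℕ ↦ (n, n)) = {q | q.1 = q.2} := by
  ext ⟨m, n⟩
  simp only [Set.mem_range, Set.mem_ofPred_eq, Prod.ext_iff]
  exact ⟨by omega, fun h ↦ ⟨m, rfl, h⟩⟩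

lemma Summable.tsum_prod_nat_eq_lt_add_gt_add_diag {α : Type*} [AddCommGroup α]
    [UniformSpace α] [IsUniformAddGroup α] [CompleteSpace α] [T2Space α]
    {f : ℕ × ℕ → α} (hf : Summable f) :
    ∑' q, f q = ∑' q : ℕ × ℕ, f (q.1 + q.2 + 1, q.2) + ∑' q : ℕ × ℕ, f (q.2, q.1 + q.2 + 1) +
      ∑' n, f (n, n) := by
  have tsum_range_indicator {β : Type} {g : β → ℕ × ℕ} (hg : g.Injective) :
      ∑' q, (Set.range g).indicator f q = ∑' c, f (g c) := by
    rw [← _root_.tsum_subtype, tsum_range f hg]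
  have hsplit (q : ℕ × ℕ) : f q = {q : ℕ × ℕ | q.2 < q.1}.indicator f q +
      {q : ℕ × ℕ | q.1 < q.2}.indicator f q + {q : ℕ × ℕ | q.1 = q.2}.indicator f q := by
    simp only [Set.indicator_apply, Set.mem_ofPred_eq]
    rcases lt_trichotomy q.1 q.2 with h | h | h
    · simp [h, h.not_gt, h.ne]
    · simp [h]
    · simp [h, h.not_gt, h.ne']
  rw [tsum_congr hsplit, ((hf.indicator _).add (hf.indicator _)).tsum_add (hf.indicator _),
    (hf.indicator _).tsum_add (hf.indicator _), ← range_add_fst_eq_setOf_lt,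
    ← range_add_snd_eq_setOf_lt, ← range_diag_eq_setOf_eq, tsum_range_indicator,
    tsum_range_indicator, tsum_range_indicator]
  · intro n n' h; simpa using h
  · intro c c' h; simp only [Prod.ext_iff] at h ⊢; omega
  · intro c c' h; simp only [Prod.ext_iff] at h ⊢; omega

/-- `tornheimTerm a b c (u - 1, v - 1) = 1 / (u^a v^b (u+v)^c)`. -/
noncomputable def tornheimTerm (a b c : ℕ) (q : ℕ × ℕ) : ℝ :=
  1 / (((q.1 : ℝ) + 1) ^ a * ((q.2 : ℝ) + 1) ^ b * ((q.1 : ℝ) + q.2 + 2) ^ c)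

noncomputable def tornheim (a b c : ℕ) : ℝ := ∑' q, tornheimTerm a b c q

lemma tornheimTerm_nonneg (a b c : ℕ) (q : ℕ × ℕ) : 0 ≤ tornheimTerm a b c q := by
  unfold tornheimTerm; positivity

lemma tornheimTerm_swap (a b c : ℕ) (q : ℕ × ℕ) :
    tornheimTerm a b c q.swap = tornheimTerm b a c q := by
  simp only [tornheimTerm, Prod.fst_swap, Prod.snd_swap]
  ring_nf

lemma tornheim_comm (a b c : ℕ) : tornheim a b c = tornheim b a c := by
  simp only [tornheim, ← tornheimTerm_swap b a]
  exact (Equiv.prodComm ℕ ℕ).tsum_eq (tornheimTerm b a c)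

/-- The truncated differences `2 - a`, `2 - b` are the powers of `u`, `v` missing for a
comparison with `1 / (u² v²)`; they are taken from `(u + v)^c`. -/
lemma summable_tornheimTerm {a b c : ℕ} (h : 2 - a + (2 - b) ≤ c) :
    Summable (tornheimTerm a b c) := by
  have hprod := (summable_one_div_nat_add_one_pow le_rfl).mul_of_nonneg
    (summable_one_div_nat_add_one_pow le_rfl) (fun n ↦ by positivity) (fun n ↦ by positivity)
  refine hprod.of_nonneg_of_le (tornheimTerm_nonneg a b c) fun q ↦ ?_
  obtain ⟨c, rfl⟩ : ∃ d, c = 2 - a + (2 - b) + d := ⟨c - (2 - a + (2 - b)), by omega⟩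
  set u : ℝ := q.1 + 1
  set v : ℝ := q.2 + 1
  have hu : 1 ≤ u := by simp [u]
  have hv : 1 ≤ v := by simp [v]
  have hm : (q.1 : ℝ) + q.2 + 2 = u + v := by ring
  rw [tornheimTerm, hm, div_mul_div_comm, one_mul]
  apply one_div_le_one_div_of_le (by positivity)
  calc u ^ 2 * v ^ 2 ≤ u ^ (a + (2 - a)) * v ^ (b + (2 - b)) := by
        gcongr <;> first | exact hu | exact hv | omega
    _ = u ^ a * v ^ b * (u ^ (2 - a) * v ^ (2 - b)) := by ring
    _ ≤ u ^ a * v ^ b * ((u + v) ^ (2 - a) * (u + v) ^ (2 - b)) := by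
        gcongr <;> linarith
    _ ≤ u ^ a * v ^ b * ((u + v) ^ (2 - a) * (u + v) ^ (2 - b)) * (u + v) ^ c :=
        le_mul_of_one_le_right (by positivity) (one_le_pow₀ (by linarith))
    _ = _ := by ring

lemma tornheimTerm_succ_succ (a b c : ℕ) (q : ℕ × ℕ) :
    tornheimTerm (a + 1) (b + 1) c q =
      tornheimTerm a (b + 1) (c + 1) q + tornheimTerm (a + 1) b (c + 1) q := by
  have hu : (q.1 : ℝ) + 1 ≠ 0 := by positivity
  have hv : (q.2 : ℝ) + 1 ≠ 0 := by positivity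
  have hm : (q.1 : ℝ) + q.2 + 2 ≠ 0 := by positivity
  simp only [tornheimTerm]
  field_simp
  ring

lemma tornheim_succ_succ (a b c : ℕ) (h : 2 - a + (2 - b) ≤ c + 1) :
    tornheim (a + 1) (b + 1) c = tornheim a (b + 1) (c + 1) + tornheim (a + 1) b (c + 1) := by
  simp only [tornheim, tornheimTerm_succ_succ a b c]
  exact (summable_tornheimTerm (by omega)).tsum_add (summable_tornheimTerm (by omega))

def natProdEquivDzetaIndex : ℕ × ℕ ≃ {p : ℕ × ℕ // p.2 < p.1 ∧ 0 < p.2} where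
  toFun q := ⟨(q.1 + q.2 + 2, q.2 + 1), by omega, by omega⟩
  invFun p := (p.1.1 - p.1.2 - 1, p.1.2 - 1)
  left_inv q := by ext <;> simp only <;> omega
  right_inv p := by ext <;> simp only <;> omega

lemma dzeta_eq_tornheim (a b : ℕ) : dzeta a b = tornheim 0 b a := by
  rw [dzeta, ← natProdEquivDzetaIndex.tsum_eq, tornheim]
  refine tsum_congr fun q ↦ ?_
  simp only [natProdEquivDzetaIndex, Equiv.coe_fn_mk, tornheimTerm]
  push_cast
  ring_nf

lemma zeta_mul_zeta {a b : ℕ} (ha : 2 ≤ a) (hb : 2 ≤ b) :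
    zeta a * zeta b = dzeta a b + dzeta b a + zeta (a + b) := by
  have hsa := summable_one_div_nat_add_one_pow ha
  have hsb := summable_one_div_nat_add_one_pow hb
  have hprod := hsa.mul_of_nonneg hsb (fun n ↦ by positivity) (fun n ↦ by positivity)
  rw [zeta, zeta, hsa.tsum_mul_tsum hsb hprod, hprod.tsum_prod_nat_eq_lt_add_gt_add_diag,
    dzeta_eq_tornheim, dzeta_eq_tornheim, tornheim, tornheim, zeta]
  congr 1
  · congr 1 <;> refine tsum_congr fun q ↦ ?_ <;> simp only [tornheimTerm] <;> push_cast <;> ring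
  · exact tsum_congr fun n ↦ by ring

/-- Summand of `ζ⋆(a,b) = Σ_{m ≥ n ≥ 1} 1/(m^a n^b)`, with `m = q.1 + 1` and `n = q.2 + 1`. -/
noncomputable def dzetaStarTerm (a b : ℕ) (q : ℕ × ℕ) : ℝ :=
  if q.2 ≤ q.1 then 1 / (((q.1 : ℝ) + 1) ^ a * ((q.2 : ℝ) + 1) ^ b) else 0

lemma dzetaStarTerm_nonneg (a b : ℕ) (q : ℕ × ℕ) : 0 ≤ dzetaStarTerm a b q := by
  unfold dzetaStarTerm; split_ifs <;> positivity

lemma summable_dzetaStarTerm {a b : ℕ} (ha : 3 ≤ a) (hb : 1 ≤ b) :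
    Summable (dzetaStarTerm a b) := by
  obtain ⟨a, rfl⟩ : ∃ a', a = a' + 1 := ⟨a - 1, by omega⟩
  refine (summable_tornheimTerm (a := a) (b := b + 1) (c := 0) (by omega)).of_nonneg_of_le
    (dzetaStarTerm_nonneg _ _) fun q ↦ ?_
  rw [dzetaStarTerm]
  split_ifs with h
  · have h' : (q.2 : ℝ) + 1 ≤ q.1 + 1 := by exact_mod_cast Nat.add_le_add_right h 1
    refine one_div_le_one_div_of_le (by positivity) ?_
    calc ((q.1 : ℝ) + 1) ^ a * ((q.2 : ℝ) + 1) ^ (b + 1) * ((q.1 : ℝ) + q.2 + 2) ^ 0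
        = ((q.1 : ℝ) + 1) ^ a * (q.2 + 1) ^ b * (q.2 + 1) := by ring
      _ ≤ ((q.1 : ℝ) + 1) ^ a * (q.2 + 1) ^ b * (q.1 + 1) := by gcongr
      _ = _ := by ring
  · exact tornheimTerm_nonneg _ _ _ _

lemma tsum_dzetaStarTerm {a b : ℕ} (ha : 3 ≤ a) (hb : 1 ≤ b) :
    ∑' q, dzetaStarTerm a b q = dzeta a b + zeta (a + b) := by
  have hupper : ∑' q : ℕ × ℕ, dzetaStarTerm a b (q.2, q.1 + q.2 + 1) = 0 :=
    (tsum_congr fun q ↦ if_neg (by omega)).trans tsum_zero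
  rw [(summable_dzetaStarTerm ha hb).tsum_prod_nat_eq_lt_add_gt_add_diag, hupper, add_zero,
    dzeta_eq_tornheim, tornheim, zeta]
  congr 1 <;> refine tsum_congr fun q ↦ ?_
  · simp only [dzetaStarTerm, tornheimTerm, if_pos (by omega : q.2 ≤ q.1 + q.2 + 1)]
    push_cast
    ring
  · simp only [dzetaStarTerm, le_refl, if_true]
    ring

lemma tornheim_one_one {b : ℕ} (hb : 2 ≤ b) :
    tornheim b 1 1 = dzeta (b + 1) 1 + zeta (b + 2) := by
  have hrow (m : ℕ) :
      ∑' n, tornheimTerm b 1 1 (m, n) = ∑' n, dzetaStarTerm (b + 1) 1 (m, n) := by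
    have hH := (hasSum_one_div_mul_add m.succ_pos).mul_left (1 / ((m : ℝ) + 1) ^ b)
    rw [(hH.congr_fun fun n ↦ ?_).tsum_eq,
      tsum_eq_sum (f := fun n ↦ dzetaStarTerm (b + 1) 1 (m, n)) (s := range (m + 1))
        fun n hn ↦ if_neg (by simpa using hn), sum_div, mul_sum]
    · refine sum_congr rfl fun n hn ↦ ?_
      simp only [dzetaStarTerm, if_pos (mem_range_succ_iff.mp hn)]
      push_cast
      field_simp
      ring
    · simp only [tornheimTerm]
      push_cast
      field_simp
      ring
  calc tornheim b 1 1 = ∑' m, ∑' n, tornheimTerm b 1 1 (m, n) :=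
        (summable_tornheimTerm (by omega)).tsum_prod
    _ = ∑' q, dzetaStarTerm (b + 1) 1 q := by
      rw [tsum_congr hrow, (summable_dzetaStarTerm (by omega) le_rfl).tsum_prod]
    _ = dzeta (b + 1) 1 + zeta (b + 2) := tsum_dzetaStarTerm (by omega) le_rfl

/-- `ζ(4,1) = 2·ζ(5) − ζ(2)·ζ(3)`, i.e.
`Σ_{m>n>0} 1/(m⁴·n) = 2·Σ_{n≥1} 1/n⁵ − (Σ_{n≥1} 1/n²)·(Σ_{n≥1} 1/n³)`. -/
theorem zeta_four_one_eq : dzeta 4 1 = 2 * zeta 5 - zeta 2 * zeta 3 := by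
  have h₁ : tornheim 1 1 3 = 2 * dzeta 4 1 := by
    rw [tornheim_succ_succ 0 0 3 (by norm_num), tornheim_comm 1 0, ← dzeta_eq_tornheim]
    ring
  have h₂ : tornheim 1 2 2 = dzeta 3 2 + tornheim 1 1 3 := by
    rw [tornheim_succ_succ 0 1 2 (by norm_num), dzeta_eq_tornheim]
  have h₃ : tornheim 1 3 1 = dzeta 2 3 + tornheim 1 2 2 := by
    rw [tornheim_succ_succ 0 2 1 (by norm_num), dzeta_eq_tornheim]
  have h₄ : tornheim 1 3 1 = dzeta 4 1 + zeta 5 := by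
    rw [tornheim_comm, tornheim_one_one (by norm_num)]
  have h₅ : zeta 2 * zeta 3 = dzeta 2 3 + dzeta 3 2 + zeta 5 :=
    zeta_mul_zeta le_rfl (by norm_num)
  linarith
end
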